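/- arXiv:2403.15057 — 2 statements merged into one kernel-verified Lean document; each statement's English description precedes it below -/
import Mathlib

section
/- Let r > 0, let σ be a finite Borel measure on ℝ² whose support is contained in the closed ball of radius r centered at 0, and let μ ∈ L¹(σ) satisfy ∫ μ dσ = 0. Then there exists r₁ > r such that for every x ∈ ℝ² with ‖x‖ ≥ r₁ one has |v[μ](x)| ≤ (3/(4π)) · (r/‖x‖) · ∫ |μ| dσ. -/
open MeasureTheory Metric Filter Topology

noncomputable section

/-- The `(n-1)`-dimensional Hausdorff measure of the unit sphere of `ℝⁿ`. -/
def sphereArea (n : ℕ) : ℝ :=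
  (MeasureTheory.Measure.hausdorffMeasure ((n : ℝ) - 1)
    (Metric.sphere (0 : EuclideanSpace ℝ (Fin n)) 1)).toReal

/-- The fundamental solution of the Laplace operator in `ℝⁿ`. -/
def fundSol (n : ℕ) (ξ : EuclideanSpace ℝ (Fin n)) : ℝ :=
  if n = 2 then (1 / (2 * Real.pi)) * Real.log ‖ξ‖
  else ‖ξ‖ ^ ((2 : ℝ) - n) / (((2 : ℝ) - n) * sphereArea n)

/-- The support of a measure: the smallest closed set whose complement is null. -/
def measSupport {E : Type*} [TopologicalSpace E] [MeasurableSpace E]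
    (σ : MeasureTheory.Measure E) : Set E :=
  ⋂₀ {C : Set E | IsClosed C ∧ σ Cᶜ = 0}

/-- Partial derivative in the `i`-th coordinate direction. -/
def pderivE {n : ℕ} (i : Fin n) (f : EuclideanSpace ℝ (Fin n) → ℝ) :
    EuclideanSpace ℝ (Fin n) → ℝ :=
  fun x => fderiv ℝ f x (EuclideanSpace.single i 1)

/-- Iterated partial derivative `D^η` associated with the multi-index `η`. -/
def mderiv {n : ℕ} (η : Fin n → ℕ) (f : EuclideanSpace ℝ (Fin n) → ℝ) :
    EuclideanSpace ℝ (Fin n) → ℝ :=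
  ((List.ofFn fun i : Fin n => (pderivE i)^[η i]).foldr (fun g h => g ∘ h) id) f

/-- `f` is harmonic on `U`: twice continuously differentiable on `U` with vanishing
Laplacian on `U`. -/
def HarmonicOnSet {n : ℕ} (f : EuclideanSpace ℝ (Fin n) → ℝ)
    (U : Set (EuclideanSpace ℝ (Fin n))) : Prop :=
  ContDiffOn ℝ 2 f U ∧ ∀ x ∈ U, (∑ i : Fin n, pderivE i (pderivE i f) x) = 0

/-!
Since `∫ μ dσ = 0`, the constant `S₂(x)` may be subtracted from the kernel for free:
`v[μ](x) = ∫ (S₂(x - y) - S₂(x)) μ(y) dσ(y)`. For `‖y‖ ≤ r ≤ ‖x‖ / 3` one has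
`‖x - y‖ ≥ 2‖x‖/3`, so `log a - log b ≤ (a - b) / b` applied in both directions gives
`|log ‖x - y‖ - log ‖x‖| ≤ (3/2) r/‖x‖`, and we may take `r₁ = 3r`.
-/

open Real

lemma measSupport_eq_support {X : Type*} [TopologicalSpace X] [MeasurableSpace X]
    (σ : Measure X) : measSupport σ = σ.support :=
  σ.support_eq_sInter.symm

lemma ae_mem_of_measSupport_subset {X : Type*} [TopologicalSpace X] [HereditarilyLindelofSpace X]
    [MeasurableSpace X] {σ : Measure X} {s : Set X} (h : measSupport σ ⊆ s) :
    ∀ᵐ y ∂σ, y ∈ s :=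
  mem_of_superset (measSupport_eq_support σ ▸ σ.support_mem_ae) h

lemma fundSol_two (ξ : EuclideanSpace ℝ (Fin 2)) :
    fundSol 2 ξ = 1 / (2 * π) * log ‖ξ‖ := by
  simp [fundSol]

lemma measurable_fundSol (n : ℕ) : Measurable (fundSol n) := by
  unfold fundSol
  split_ifs <;> fun_prop

lemma log_sub_log_le_sub_div {a b : ℝ} (ha : 0 < a) (hb : 0 < b) :
    log a - log b ≤ (a - b) / b := by
  have h := log_le_sub_one_of_pos (div_pos ha hb)
  rwa [log_div ha.ne' hb.ne', div_sub_one hb.ne'] at h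

lemma abs_log_sub_log_le {a b r : ℝ} (hb : 0 < b) (h3r : 3 * r ≤ b) (hab : |a - b| ≤ r) :
    |log a - log b| ≤ 3 / 2 * (r / b) := by
  obtain ⟨hba, hab'⟩ := abs_le.1 hab
  have ha : 2 / 3 * b ≤ a := by linarith
  have ha0 : 0 < a := by linarith
  rw [abs_sub_le_iff]
  constructor
  · calc log a - log b ≤ (a - b) / b := log_sub_log_le_sub_div ha0 hb
      _ ≤ r / b := by gcongr
      _ ≤ 3 / 2 * (r / b) := le_mul_of_one_le_left (div_nonneg (by linarith) hb.le) (by norm_num)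
  · calc log b - log a ≤ (b - a) / a := log_sub_log_le_sub_div hb ha0
      _ ≤ r / (2 / 3 * b) := by gcongr <;> linarith
      _ = 3 / 2 * (r / b) := by field_simp

lemma abs_log_norm_sub_sub_log_norm_le {E : Type*} [SeminormedAddCommGroup E] {x y : E} {r : ℝ}
    (hr : 0 < r) (hx : 3 * r ≤ ‖x‖) (hy : ‖y‖ ≤ r) :
    |log ‖x - y‖ - log ‖x‖| ≤ 3 / 2 * (r / ‖x‖) := by
  refine abs_log_sub_log_le (by linarith) hx ((abs_norm_sub_norm_le _ _).trans ?_)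
  simpa using hy

theorem abs_integral_mul_le_of_integral_eq_zero {α : Type*} [MeasurableSpace α] {ν : Measure α}
    {f g : α → ℝ} {c C : ℝ} (hg : Integrable g ν) (hg0 : ∫ y, g y ∂ν = 0)
    (hf : AEStronglyMeasurable f ν) (hfc : ∀ᵐ y ∂ν, |f y - c| ≤ C) :
    |∫ y, f y * g y ∂ν| ≤ C * ∫ y, |g y| ∂ν := by
  have hint : Integrable (fun y => (f y - c) * g y) ν :=
    hg.bdd_mul (hf.sub aestronglyMeasurable_const) hfc
  have hshift : ∫ y, f y * g y ∂ν = ∫ y, (f y - c) * g y ∂ν := by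
    calc ∫ y, f y * g y ∂ν = ∫ y, ((f y - c) * g y + c * g y) ∂ν := by
          congr 1; ext y; ring
      _ = ∫ y, (f y - c) * g y ∂ν := by
        rw [integral_add hint (hg.const_mul c), integral_const_mul, hg0, mul_zero, add_zero]
  rw [hshift, ← integral_const_mul, ← Real.norm_eq_abs]
  refine norm_integral_le_of_norm_le (hg.abs.const_mul C) ?_
  filter_upwards [hfc] with y hy
  rw [norm_mul, Real.norm_eq_abs, Real.norm_eq_abs]
  exact mul_le_mul_of_nonneg_right hy (abs_nonneg _)

theorem singleLayer_two_dim_decay_estimate_general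
    (r : ℝ) (hr : 0 < r)
    (σ : Measure (EuclideanSpace ℝ (Fin 2)))
    (hsupp : measSupport σ ⊆ Metric.closedBall 0 r)
    (μ : EuclideanSpace ℝ (Fin 2) → ℝ) (hμ : Integrable μ σ)
    (hmean : (∫ y, μ y ∂σ) = 0) :
    ∃ r₁ : ℝ, r < r₁ ∧ ∀ x : EuclideanSpace ℝ (Fin 2), r₁ ≤ ‖x‖ →
      |∫ y, fundSol 2 (x - y) * μ y ∂σ| ≤
        (3 / (4 * Real.pi)) * (r / ‖x‖) * ∫ y, |μ y| ∂σ := by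
  refine ⟨3 * r, by linarith, fun x hx => ?_⟩
  have hball : ∀ᵐ y ∂σ, ‖y‖ ≤ r := by
    filter_upwards [ae_mem_of_measSupport_subset hsupp] with y hy
    exact mem_closedBall_zero_iff.1 hy
  have hclose : ∀ᵐ y ∂σ,
      |fundSol 2 (x - y) - fundSol 2 x| ≤ 1 / (2 * π) * (3 / 2 * (r / ‖x‖)) := by
    filter_upwards [hball] with y hy
    rw [fundSol_two, fundSol_two, ← mul_sub, abs_mul, abs_of_pos (by positivity)]
    exact mul_le_mul_of_nonneg_left (abs_log_norm_sub_sub_log_norm_le hr hx hy) (by positivity)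
  have hmeas : AEStronglyMeasurable (fun y => fundSol 2 (x - y)) σ :=
    ((measurable_fundSol 2).comp (measurable_const.sub measurable_id)).aestronglyMeasurable
  calc |∫ y, fundSol 2 (x - y) * μ y ∂σ|
      ≤ 1 / (2 * π) * (3 / 2 * (r / ‖x‖)) * ∫ y, |μ y| ∂σ :=
        abs_integral_mul_le_of_integral_eq_zero hμ hmean hmeas hclose
    _ = 3 / (4 * π) * (r / ‖x‖) * ∫ y, |μ y| ∂σ := by ring

/-- decay estimate for the planar single layer potential of a density with
vanishing mean. -/
theorem singleLayer_two_dim_decay_estimate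
    (r : ℝ) (hr : 0 < r)
    (σ : Measure (EuclideanSpace ℝ (Fin 2))) [IsFiniteMeasure σ]
    (hsupp : measSupport σ ⊆ Metric.closedBall 0 r)
    (μ : EuclideanSpace ℝ (Fin 2) → ℝ) (hμ : Integrable μ σ)
    (hmean : (∫ y, μ y ∂σ) = 0) :
    ∃ r₁ : ℝ, r < r₁ ∧ ∀ x : EuclideanSpace ℝ (Fin 2), r₁ ≤ ‖x‖ →
      |∫ y, fundSol 2 (x - y) * μ y ∂σ| ≤
        (3 / (4 * Real.pi)) * (r / ‖x‖) * ∫ y, |μ y| ∂σ :=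
  singleLayer_two_dim_decay_estimate_general r hr σ hsupp μ hμ hmean
end
end

section
/- Let n ≥ 2 be an integer. There exists ς ∈ (0,∞) such that for every multi-index η ∈ ℕⁿ with η ≠ 0, sup_{ξ ∈ ℝⁿ∖{0}} ‖ξ‖^{|η| + n − 2} · |D^η S_n(ξ)| ≤ ς^{|η|} · |η|!. -/
open MeasureTheory Metric Filter Topology

noncomputable section

/-!
Off the origin, every derivative of order `k ≥ 1` of `S_n` is a finite sum of terms
`c ⟪v₁, x⟫ ⋯ ⟪vⱼ, x⟫ ‖x‖ ^ e` with `‖vᵢ‖ ≤ 1`, `j ≤ k` and `j + e = 2 - n - k`; for `n = 2` this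
starts with `∂_w log ‖x‖ = ⟪w, x⟫ ‖x‖ ^ (-2)`. Differentiating such a term in a unit direction
produces terms whose coefficients add up to at most `(j + |e|) |c| ≤ (2k + |2 - n - k|) |c|`,
which is `O(k + 1) |c|`. Hence the total mass `∑ |c|` after `k` derivatives is at most `ς ^ k k!`,
and the homogeneity of the terms gives `|D^η S_n(ξ)| ≤ ς ^ k k! ‖ξ‖ ^ (2 - n - k)`.
-/

open scoped RealInnerProductSpace Nat

section
variable {E : Type*} [NormedAddCommGroup E] [InnerProductSpace ℝ E]

theorem hasFDerivAt_norm {x : E} (hx : x ≠ 0) :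
    HasFDerivAt (‖·‖) (‖x‖⁻¹ • innerSL ℝ x) x := by
  have h := (Real.hasDerivAt_sqrt (by positivity : ‖x‖ ^ 2 ≠ 0)).comp_hasFDerivAt x
    (hasStrictFDerivAt_norm_sq x).hasFDerivAt
  rw [show ((√·) ∘ fun y : E => ‖y‖ ^ 2) = (‖·‖) from
    funext fun y => Real.sqrt_sq (norm_nonneg y)] at h
  refine h.congr_fderiv ?_
  ext y
  simp only [Real.sqrt_sq (norm_nonneg x), one_div, mul_inv_rev, smul_apply, coe_innerSL_apply,
    nsmul_eq_mul, Nat.cast_ofNat, smul_eq_mul]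
  field_simp

theorem fderiv_norm_zpow_apply {x : E} (hx : x ≠ 0) (e : ℤ) (w : E) :
    fderiv ℝ (fun y : E => ‖y‖ ^ e) x w = e * (⟪w, x⟫ * ‖x‖ ^ (e - 2)) := by
  have hne : ‖x‖ ≠ 0 := norm_ne_zero_iff.2 hx
  have h : HasFDerivAt (fun y : E => ‖y‖ ^ e) _ x :=
    (hasDerivAt_zpow e ‖x‖ (.inl hne)).comp_hasFDerivAt x (hasFDerivAt_norm hx)
  rw [h.fderiv]
  simp only [zpow_sub₀ hne, zpow_ofNat, pow_one, smul_apply, coe_innerSL_apply, smul_eq_mul,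
    real_inner_comm]
  field_simp

theorem fderiv_log_norm_apply {x : E} (hx : x ≠ 0) (w : E) :
    fderiv ℝ (fun y : E => Real.log ‖y‖) x w = ⟪w, x⟫ * ‖x‖ ^ (-2 : ℤ) := by
  have h : HasFDerivAt (fun y : E => Real.log ‖y‖) _ x :=
    (Real.hasDerivAt_log (norm_ne_zero_iff.2 hx)).comp_hasFDerivAt x (hasFDerivAt_norm hx)
  rw [h.fderiv]
  simp only [smul_apply, coe_innerSL_apply, smul_eq_mul, real_inner_comm, zpow_neg, zpow_ofNat]
  ring

/-- `HomogExpansion d m B g`: off the origin, `g` is a finite sum of terms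
`c * ⟪v₁, x⟫ * ⋯ * ⟪vⱼ, x⟫ * ‖x‖ ^ e` with `‖vᵢ‖ ≤ 1`, `j ≤ m`, `j + e = d` and `∑ |c| ≤ B`. -/
inductive HomogExpansion : ℤ → ℕ → ℝ → (E → ℝ) → Prop
  | zpow (e : ℤ) : HomogExpansion e 0 1 fun x => ‖x‖ ^ e
  | inner_mul {d m B g} (v : E) (hv : ‖v‖ ≤ 1) :
      HomogExpansion d m B g → HomogExpansion (d + 1) (m + 1) B fun x => ⟪v, x⟫ * g x
  | const_mul {d m B g} (c : ℝ) :
      HomogExpansion d m B g → HomogExpansion d m (|c| * B) fun x => c * g x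
  | add {d m B C g h} :
      HomogExpansion d m B g → HomogExpansion d m C h → HomogExpansion d m (B + C) (g + h)
  | mono {d m m' B B' g} :
      HomogExpansion d m B g → m ≤ m' → B ≤ B' → HomogExpansion d m' B' g
  | congr {d m B g h} : HomogExpansion d m B g → Set.EqOn g h {0}ᶜ → HomogExpansion d m B h

namespace HomogExpansion

variable {d : ℤ} {m : ℕ} {B : ℝ} {g : E → ℝ}

theorem nonneg (h : HomogExpansion d m B g) : 0 ≤ B := by
  induction h with
  | zpow => exact zero_le_one
  | inner_mul _ _ _ ih => exact ih
  | const_mul c _ ih => exact mul_nonneg (abs_nonneg c) ih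
  | add _ _ ihg ihh => exact add_nonneg ihg ihh
  | mono _ _ hB ih => exact ih.trans hB
  | congr _ _ ih => exact ih

theorem abs_le (h : HomogExpansion d m B g) {x : E} (hx : x ≠ 0) :
    |g x| ≤ B * ‖x‖ ^ d := by
  have hx' : 0 < ‖x‖ := norm_pos_iff.2 hx
  induction h with
  | zpow e => simp [abs_of_nonneg (zpow_nonneg (norm_nonneg x) e)]
  | @inner_mul d m B g v hv _ ih =>
    have hvx : |⟪v, x⟫| ≤ ‖x‖ :=
      (abs_real_inner_le_norm v x).trans (mul_le_of_le_one_left (norm_nonneg x) hv)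
    calc |⟪v, x⟫ * g x| ≤ ‖x‖ * (B * ‖x‖ ^ d) := by
          rw [abs_mul]; exact mul_le_mul hvx ih (abs_nonneg _) (norm_nonneg x)
      _ = B * ‖x‖ ^ (d + 1) := by rw [zpow_add_one₀ hx'.ne']; ring
  | const_mul c _ ih =>
    rw [abs_mul, mul_assoc]
    exact mul_le_mul_of_nonneg_left ih (abs_nonneg c)
  | add _ _ ihg ihh => exact (abs_add_le _ _).trans (by rw [add_mul]; exact add_le_add ihg ihh)
  | mono _ _ hB ih => exact ih.trans (mul_le_mul_of_nonneg_right hB (by positivity))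
  | congr _ hgh ih => exact hgh hx ▸ ih

theorem zpow_neg_mul_abs_le (h : HomogExpansion d m B g) {x : E} (hx : x ≠ 0) :
    ‖x‖ ^ (-d) * |g x| ≤ B := by
  have hx' : 0 < ‖x‖ := norm_pos_iff.2 hx
  calc ‖x‖ ^ (-d) * |g x| ≤ ‖x‖ ^ (-d) * (B * ‖x‖ ^ d) := by gcongr; exact h.abs_le hx
    _ = B := by rw [mul_left_comm, ← zpow_add₀ hx'.ne', neg_add_cancel, zpow_zero, mul_one]

theorem differentiableAt (h : HomogExpansion d m B g) {x : E} (hx : x ≠ 0) :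
    DifferentiableAt ℝ g x := by
  induction h with
  | zpow e => exact (differentiableAt_id.norm ℝ hx).zpow (.inl (norm_ne_zero_iff.2 hx))
  | inner_mul v _ _ ih => exact ((innerSL ℝ v).differentiableAt).mul ih
  | const_mul c _ ih => exact ih.const_mul c
  | add _ _ ihg ihh => exact ihg.add ihh
  | mono _ _ _ ih => exact ih
  | congr _ hgh ih =>
    exact ih.congr_of_eventuallyEq
      (hgh.eventuallyEq_of_mem (isOpen_compl_singleton.mem_nhds hx)).symm

theorem fderiv (h : HomogExpansion d m B g) {w : E} (hw : ‖w‖ ≤ 1) :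
    HomogExpansion (d - 1) (m + 1) ((2 * m + |(d : ℝ)|) * B) fun x => fderiv ℝ g x w := by
  induction h with
  | zpow e =>
    have h := ((zpow (e - 2)).inner_mul w hw).const_mul (e : ℝ)
    rw [show e - 2 + 1 = e - 1 by ring] at h
    refine (h.congr fun x hx => (fderiv_norm_zpow_apply hx e w).symm).mono le_rfl ?_
    simp
  | @inner_mul d m B g v hv hg ih =>
    have hfirst := (hg.const_mul ⟪v, w⟫).mono (Nat.le_add_right m 2)
      (mul_le_of_le_one_left hg.nonneg ((abs_real_inner_le_norm v w).trans
        (mul_le_one₀ hv (norm_nonneg w) hw)))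
    have hsecond := ih.inner_mul v hv
    rw [sub_add_cancel] at hsecond
    rw [add_sub_cancel_right]
    refine ((hfirst.add hsecond).congr fun x hx => ?_).mono le_rfl ?_
    · have hd : HasFDerivAt (fun y => ⟪v, y⟫ * g y) _ x :=
        (innerSL ℝ v).hasFDerivAt.mul (hg.differentiableAt hx).hasFDerivAt
      simp only [Pi.add_apply, hd.fderiv, coe_innerSL_apply, add_apply, smul_apply, smul_eq_mul]
      ring
    · have hd : |(d : ℝ)| ≤ |(d : ℝ) + 1| + 1 := by simpa using abs_add_le ((d : ℝ) + 1) (-1)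
      push_cast
      nlinarith [mul_le_mul_of_nonneg_right hd hg.nonneg]
  | const_mul c hg ih =>
    refine ((ih.const_mul c).congr fun x hx => ?_).mono le_rfl (by rw [mul_left_comm])
    simp [((hg.differentiableAt hx).hasFDerivAt.const_mul c).fderiv]
  | add hg hh ihg ihh =>
    refine ((ihg.add ihh).congr fun x hx => ?_).mono le_rfl (by rw [mul_add])
    simp [fderiv_add (hg.differentiableAt hx) (hh.differentiableAt hx)]
  | mono hg hm hB ih =>
    refine ih.mono (by omega) (mul_le_mul ?_ hB hg.nonneg (by positivity))
    gcongr
  | congr _ hgh ih =>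
    refine ih.congr fun x hx => ?_
    simp only [(hgh.eventuallyEq_of_mem (isOpen_compl_singleton.mem_nhds hx)).fderiv_eq]

theorem fderiv_factorial {d₀ : ℤ} {k : ℕ} {b : ℝ}
    (h : HomogExpansion (d₀ - k) k (b * (|(d₀ : ℝ)| + 3) ^ k * k !) g) {w : E} (hw : ‖w‖ ≤ 1) :
    HomogExpansion (d₀ - (k + 1 : ℕ)) (k + 1) (b * (|(d₀ : ℝ)| + 3) ^ (k + 1) * (k + 1)!)
      fun x => _root_.fderiv ℝ g x w := by
  have h' := h.fderiv hw
  rw [show d₀ - k - 1 = d₀ - (k + 1 : ℕ) by push_cast; ring] at h'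
  refine h'.mono le_rfl ?_
  have hfactor : 2 * (k : ℝ) + |((d₀ - k : ℤ) : ℝ)| ≤ (|(d₀ : ℝ)| + 3) * (k + 1) := by
    have hdk : |(d₀ : ℝ) - k| ≤ |(d₀ : ℝ)| + k := by simpa using abs_sub (d₀ : ℝ) k
    push_cast
    nlinarith [mul_nonneg (abs_nonneg (d₀ : ℝ)) (Nat.cast_nonneg k : (0 : ℝ) ≤ k)]
  calc _ ≤ (|(d₀ : ℝ)| + 3) * (k + 1) * (b * (|(d₀ : ℝ)| + 3) ^ k * k !) :=
        mul_le_mul_of_nonneg_right hfactor h.nonneg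
    _ = _ := by push_cast [Nat.factorial_succ]; ring

end HomogExpansion
end

theorem mderiv_induction {n : ℕ} {P : ℕ → (EuclideanSpace ℝ (Fin n) → ℝ) → Prop}
    (step : ∀ k g i, P k g → P (k + 1) (pderivE i g)) {f : EuclideanSpace ℝ (Fin n) → ℝ}
    (hf : P 0 f) (η : Fin n → ℕ) : P (∑ i, η i) (mderiv η f) := by
  have iterate : ∀ i m k g, P k g → P (k + m) ((pderivE i)^[m] g) := by
    intro i m
    induction m with
    | zero => exact fun k g hg => hg
    | succ m ih =>
      intro k g hg
      rw [Function.iterate_succ_apply', ← add_assoc]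
      exact step _ _ i (ih k g hg)
  have foldr : ∀ l : List (Fin n),
      P (l.map η).sum ((l.map fun i => (pderivE i)^[η i]).foldr (fun g h => g ∘ h) id f) := by
    intro l
    induction l with
    | nil => exact hf
    | cons i l ih =>
      rw [List.map_cons, List.sum_cons, add_comm]
      exact iterate i (η i) _ _ ih
  rw [mderiv, List.ofFn_eq_map, Fin.sum_univ_def]
  exact foldr _

theorem homogExpansion_fundSol {n : ℕ} (hn : n ≠ 2) :
    HomogExpansion (2 - n) 0 |((2 - n) * sphereArea n)⁻¹| (fundSol n) := by
  refine (((HomogExpansion.zpow _).const_mul _).congr fun x _ => ?_).mono le_rfl (mul_one _).le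
  rw [fundSol, if_neg hn, div_eq_inv_mul, ← Real.rpow_intCast]
  push_cast
  rfl

theorem exists_homogExpansion_pderivE_fundSol (n : ℕ) :
    ∃ B, ∀ i : Fin n, HomogExpansion (1 - n) 1 B (pderivE i (fundSol n)) := by
  by_cases hn : n = 2
  · subst hn
    refine ⟨|1 / (2 * Real.pi)| * 1, fun i => ?_⟩
    have h := ((HomogExpansion.zpow (-2)).inner_mul (EuclideanSpace.single i (1 : ℝ))
      (by simp)).const_mul (1 / (2 * Real.pi))
    rw [show (-2 + 1 : ℤ) = 1 - (2 : ℕ) by norm_num] at h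
    refine h.congr fun x hx => ?_
    have hlog : DifferentiableAt ℝ (fun y : EuclideanSpace ℝ (Fin 2) => Real.log ‖y‖) x :=
      (differentiableAt_id.norm ℝ hx).log (norm_ne_zero_iff.2 hx)
    have hS : fundSol 2 = fun y => 1 / (2 * Real.pi) * Real.log ‖y‖ := funext fun _ => if_pos rfl
    rw [pderivE, hS, fderiv_const_mul hlog, FunLike.coe_smul, Pi.smul_apply,
      fderiv_log_norm_apply hx, smul_eq_mul]
  · refine ⟨|((2 - n : ℤ) : ℝ)| * |((2 - n) * sphereArea n)⁻¹|, fun i => ?_⟩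
    have h := (homogExpansion_fundSol hn).fderiv (w := EuclideanSpace.single i (1 : ℝ)) (by simp)
    simp only [show (2 - n - 1 : ℤ) = 1 - n by ring, Nat.cast_zero, mul_zero, zero_add] at h
    exact h

theorem exists_homogExpansion_mderiv_fundSol (n : ℕ) :
    ∃ ς > 0, ∀ η : Fin n → ℕ, ∑ i, η i ≠ 0 →
      HomogExpansion (2 - n - (∑ i, η i : ℕ)) (∑ i, η i)
        (ς ^ (∑ i, η i) * (∑ i, η i)!) (mderiv η (fundSol n)) := by
  obtain ⟨B, hB⟩ := exists_homogExpansion_pderivE_fundSol n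
  set a : ℝ := |((2 - n : ℤ) : ℝ)| + 3
  have ha : 1 ≤ a := by linarith [abs_nonneg ((2 - n : ℤ) : ℝ)]
  set b : ℝ := max B 1
  have hb : 1 ≤ b := le_max_right B 1
  have hderivs := mderiv_induction (P := fun k g => k = 0 ∧ g = fundSol n ∨
      HomogExpansion (2 - n - k) k (b * a ^ k * k !) g) ?_ (f := fundSol n) (Or.inl ⟨rfl, rfl⟩)
  · refine ⟨b * a, by positivity, fun η hk => ?_⟩
    refine ((hderivs η).resolve_left (fun h => hk h.1)).mono le_rfl ?_
    rw [mul_pow]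
    gcongr
    exact le_self_pow₀ hb hk
  · rintro k g i (⟨rfl, rfl⟩ | hg)
    · have h := (hB i).mono le_rfl (B' := b * a ^ (0 + 1) * (0 + 1)!) (by
        simpa using (le_max_left B 1).trans (le_mul_of_one_le_right (by positivity) ha))
      rw [show (1 - n : ℤ) = 2 - n - ((0 + 1 : ℕ) : ℤ) by push_cast; ring] at h
      exact .inr h
    · exact .inr (hg.fderiv_factorial (by simp))

theorem fundSol_deriv_bound_general
    (n : ℕ) :
    ∃ ς : ℝ, 0 < ς ∧
      ∀ η : Fin n → ℕ, η ≠ 0 →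
      ∀ ξ : EuclideanSpace ℝ (Fin n), ξ ≠ 0 →
        ‖ξ‖ ^ ((∑ i, η i) + n - 2) * |mderiv η (fundSol n) ξ| ≤
          ς ^ (∑ i, η i) * (Nat.factorial (∑ i, η i) : ℝ) := by
  obtain ⟨ς, hς, hexp⟩ := exists_homogExpansion_mderiv_fundSol n
  refine ⟨ς, hς, fun η hη ξ hξ => ?_⟩
  have hk : ∑ i, η i ≠ 0 := fun h =>
    hη (funext fun i => Finset.sum_eq_zero_iff.mp h i (Finset.mem_univ i))
  -- rules out the truncation of the natural-number exponent `k + n - 2`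
  have hn : n ≠ 0 := by
    rintro rfl
    exact hξ (Subsingleton.elim ξ 0)
  have h := (hexp η hk).zpow_neg_mul_abs_le hξ
  rwa [show -(2 - n - (∑ i, η i : ℕ) : ℤ) = ((∑ i, η i) + n - 2 : ℕ) by omega, zpow_natCast] at h

/-- homogeneity-type bounds for all partial derivatives of the fundamental
solution of the Laplace operator. -/
theorem fundSol_deriv_bound
    (n : ℕ) (hn : 2 ≤ n) :
    ∃ ς : ℝ, 0 < ς ∧
      ∀ η : Fin n → ℕ, η ≠ 0 →
      ∀ ξ : EuclideanSpace ℝ (Fin n), ξ ≠ 0 →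
        ‖ξ‖ ^ ((∑ i, η i) + n - 2) * |mderiv η (fundSol n) ξ| ≤
          ς ^ (∑ i, η i) * (Nat.factorial (∑ i, η i) : ℝ) :=
  fundSol_deriv_bound_general n
end
end
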